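/- arXiv:2604.02673 — 2 statements merged into one kernel-verified Lean document; each statement's English description precedes it below -/
import Mathlib

section
/- Owner-local normalization preserves truth: given a simplicial secrecy model M, define M^loc by replacing each N_a^S(v) with {U ∈ N_a^S(v) : St(v) ⊆ U}, where St(v) is the set of facets containing v. Then M^loc is again a simplicial secrecy model (satisfies (SN)), and for every formula φ of the language with K_a and S_a and every facet X, φ holds at X in M iff φ holds at X in M^loc. -/
/-- Formulas of the epistemic-secrecy language: atoms, ¬, ∧, K_a, S_a. -/
inductive Form (A P : Type) : Type where
  | atom : P → Form A P
  | neg : Form A P → Form A P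
  | and : Form A P → Form A P → Form A P
  | K : A → Form A P → Form A P
  | S : A → Form A P → Form A P

/-- A simplicial secrecy model over agents `A` and propositional variables `P`:
an `A`-chromatic simplicial epistemic model (vertices `V`, downward-closed family of
non-empty finite faces `F`, colouring `χ` injective on faces, every facet containing
all colours, every vertex lying in a facet, valuation `ν` on facets) enriched with
secrecy neighborhood functions `N` attached to vertices (local states).
`va a X` is the unique vertex of colour `a` in a facet `X`. -/
structure SSModel (A P : Type) where
  V : Type
  F : Set (Finset V)
  F_nonempty : F.Nonempty
  faces_nonempty : ∀ X ∈ F, X.Nonempty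
  down_closed : ∀ X ∈ F, ∀ Y : Finset V, Y.Nonempty → Y ⊆ X → Y ∈ F
  χ : V → A
  chromatic : ∀ X ∈ F, Set.InjOn χ (X : Set V)
  va : A → Finset V → V
  va_spec : ∀ X ∈ F, (∀ Y ∈ F, X ⊆ Y → X = Y) → ∀ a : A, va a X ∈ X ∧ χ (va a X) = a
  facet_all_colours : ∀ X ∈ F, (∀ Y ∈ F, X ⊆ Y → X = Y) → ∀ a : A, ∃ v ∈ X, χ v = a
  vertex_cover : ∀ v : V, ∃ X ∈ F, (∀ Y ∈ F, X ⊆ Y → X = Y) ∧ v ∈ X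
  ν : Finset V → P → Prop
  N : V → Set (Set (Finset V))

namespace SSModel

variable {A P : Type}

/-- A facet is a maximal face. -/
def IsFacet (M : SSModel A P) (X : Finset M.V) : Prop :=
  X ∈ M.F ∧ ∀ Y ∈ M.F, X ⊆ Y → X = Y

/-- The star of a vertex: the set of facets containing it. -/
def St (M : SSModel A P) (v : M.V) : Set (Finset M.V) :=
  {X | M.IsFacet X ∧ v ∈ X}

/-- Truth at a facet. `X ~_a Y` iff `va a X = va a Y`.  `S a φ` holds iff `K a φ` holds
and the truth set of `φ` is a designated secrecy neighborhood at the owner's `a`-vertex. -/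
def Sat (M : SSModel A P) : Form A P → Finset M.V → Prop
  | Form.atom p, X => M.ν X p
  | Form.neg φ, X => ¬ M.Sat φ X
  | Form.and φ ψ, X => M.Sat φ X ∧ M.Sat ψ X
  | Form.K a φ, X => ∀ Y, M.IsFacet Y → M.va a X = M.va a Y → M.Sat φ Y
  | Form.S a φ, X =>
      (∀ Y, M.IsFacet Y → M.va a X = M.va a Y → M.Sat φ Y) ∧
      {Y : Finset M.V | M.IsFacet Y ∧ M.Sat φ Y} ∈ M.N (M.va a X)

/-- Frame condition (SN), external uncertainty: every designated secrecy event at an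
`a`-coloured local state `v` leaves every other agent `b` with an indistinguishable
facet outside the event, from every facet in the star of `v`. -/
def SN (M : SSModel A P) : Prop :=
  ∀ v : M.V, ∀ U ∈ M.N v, ∀ X : Finset M.V, M.IsFacet X → v ∈ X →
    ∀ b : A, b ≠ M.χ v → ∃ Y : Finset M.V, M.IsFacet Y ∧ M.va b X = M.va b Y ∧ Y ∉ U

end SSModel

/- A secrecy event that `a` knows at `X` contains the whole star of `a`'s vertex, since every facet
in that star is `a`-indistinguishable from `X`. Hence restricting `N_a^S(v)` to events containing
`St(v)` discards only neighborhoods that the clause for `S_a` can never select, while (SN), being a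
condition on each designated event separately, survives any shrinking of the neighborhoods. -/

namespace SSModel

variable {A P : Type}

def withN (M : SSModel A P) (N : M.V → Set (Set (Finset M.V))) : SSModel A P :=
  { M with N := N }

def truthSet (M : SSModel A P) (φ : Form A P) : Set (Finset M.V) :=
  {Y | M.IsFacet Y ∧ M.Sat φ Y}

theorem va_eq_of_va_mem (M : SSModel A P) {a : A} {X Y : Finset M.V} (hX : M.IsFacet X)
    (hY : M.IsFacet Y) (hmem : M.va a X ∈ Y) : M.va a X = M.va a Y := by
  obtain ⟨-, hXχ⟩ := M.va_spec X hX.1 hX.2 a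
  obtain ⟨hYmem, hYχ⟩ := M.va_spec Y hY.1 hY.2 a
  exact M.chromatic Y hY.1 hmem hYmem (hXχ.trans hYχ.symm)

theorem star_subset_truthSet_of_sat_K (M : SSModel A P) {a : A} {φ : Form A P}
    {X : Finset M.V} (hX : M.IsFacet X) (hK : M.Sat (Form.K a φ) X) :
    M.St (M.va a X) ⊆ M.truthSet φ :=
  fun Y ⟨hY, hmem⟩ => ⟨hY, hK Y hY (M.va_eq_of_va_mem hX hY hmem)⟩

theorem SN.withN_of_subset {M : SSModel A P} (hSN : M.SN) {N : M.V → Set (Set (Finset M.V))}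
    (hN : ∀ v, N v ⊆ M.N v) : (M.withN N).SN :=
  fun v U hU => hSN v U (hN v hU)

theorem sat_withN_iff (M : SSModel A P) {N : M.V → Set (Set (Finset M.V))}
    (hN : ∀ v U, M.St v ⊆ U → (U ∈ N v ↔ U ∈ M.N v)) (φ : Form A P) {X : Finset M.V}
    (hX : M.IsFacet X) : (M.withN N).Sat φ X ↔ M.Sat φ X := by
  induction φ generalizing X with
  | atom p => exact Iff.rfl
  | neg φ ih => exact not_congr (ih hX)
  | and φ ψ ihφ ihψ => exact and_congr (ihφ hX) (ihψ hX)
  | K a φ ih => exact forall₂_congr fun Y hY => imp_congr_right fun _ => ih hY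
  | S a φ ih =>
    have hK : (M.withN N).Sat (Form.K a φ) X ↔ M.Sat (Form.K a φ) X :=
      forall₂_congr fun Y hY => imp_congr_right fun _ => ih hY
    have htruth : (M.withN N).truthSet φ = M.truthSet φ :=
      Set.ext fun Y => and_congr_right fun hY => ih hY
    change (M.withN N).Sat (Form.K a φ) X ∧ (M.withN N).truthSet φ ∈ N (M.va a X) ↔
      M.Sat (Form.K a φ) X ∧ M.truthSet φ ∈ M.N (M.va a X)
    rw [hK, htruth]
    exact and_congr_right fun hKX => hN _ _ (M.star_subset_truthSet_of_sat_K hX hKX)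

end SSModel

/-- Owner-local normalization: restricting each secrecy neighborhood `N_a^S(v)` to the
events containing `St(v)` yields again a simplicial secrecy model (it satisfies (SN)),
and truth of every formula at every facet is preserved. -/
theorem owner_local_normalization {A P : Type} (M : SSModel A P) (hSN : M.SN) :
    (SSModel.SN { M with N := fun v => {U ∈ M.N v | M.St v ⊆ U} }) ∧
    (∀ (φ : Form A P) (X : Finset M.V), M.IsFacet X →
      (M.Sat φ X ↔
        SSModel.Sat { M with N := fun v => {U ∈ M.N v | M.St v ⊆ U} } φ X)) := by
  have hloc : ∀ v U, M.St v ⊆ U → (U ∈ {U ∈ M.N v | M.St v ⊆ U} ↔ U ∈ M.N v) :=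
    fun _ _ hU => and_iff_left hU
  exact ⟨hSN.withN_of_subset fun _ _ hU => hU.1,
    fun φ _ hX => (M.sat_withN_iff hloc φ hX).symm⟩
end

section
/- The secrecy operator is not idempotent: there exists a two-agent simplicial secrecy model M and a facet X such that S_a p holds at X but S_a S_a p fails at X. -/
/-!
In the complete bipartite complex `K_{3,3}` let `⟦p⟧ = {x₁, x₂, x₃, y₁}` be the only secrecy
neighbourhood, attached to `u₀`. Then `S_a p` holds at `x₁`, but `⟦S_a p⟧` misses `y₁`, where
agent `a` cannot rule out `y₂ ∉ ⟦p⟧`. So `⟦S_a p⟧ ≠ ⟦p⟧` is not a neighbourhood of `u₀` and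
`S_a S_a p` fails at `x₁`. Condition (SN) holds because from `x_j` agent `b` cannot rule out
`z_j ∉ ⟦p⟧`.
-/

namespace SSModel

variable {A P : Type}

theorem sat_S_iff (M : SSModel A P) (a : A) (φ : Form A P) (X : Finset M.V) :
    M.Sat (Form.S a φ) X ↔ M.Sat (Form.K a φ) X ∧ M.truthSet φ ∈ M.N (M.va a X) :=
  Iff.rfl

section CompleteBipartite

variable {ι : Type} [DecidableEq ι]

def edge (i j : ι) : Finset (ι × Bool) := {(i, true), (j, false)}

theorem mem_edge {v : ι × Bool} {i j : ι} : v ∈ edge i j ↔ v = (i, true) ∨ v = (j, false) := by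
  simp [edge]

theorem edge_subset_edge_iff {i j i' j' : ι} : edge i j ⊆ edge i' j' ↔ i = i' ∧ j = j' := by
  simp [edge, Finset.insert_subset_iff]

theorem edge_inj {i j i' j' : ι} : edge i j = edge i' j' ↔ i = i' ∧ j = j' :=
  ⟨fun h => edge_subset_edge_iff.1 h.le, by rintro ⟨rfl, rfl⟩; rfl⟩

theorem eq_of_mem_edge_of_snd_eq {v : ι × Bool} {i j : ι} (hv : v ∈ edge i j) {a : Bool}
    (ha : v.2 = a) : v = (cond a i j, a) := by
  rcases mem_edge.1 hv with rfl | rfl <;> subst ha <;> rfl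

theorem cond_mem_edge (a : Bool) (i j : ι) : (cond a i j, a) ∈ edge i j := by
  cases a <;> simp [edge]

theorem exists_mem_edge_snd_eq (i j : ι) (a : Bool) : ∃ v ∈ edge i j, v.2 = a :=
  ⟨_, cond_mem_edge a i j, rfl⟩

def bipartiteFaces : Set (Finset (ι × Bool)) :=
  {X | X.Nonempty ∧ ∃ i j, X ⊆ edge i j}

theorem edge_mem_bipartiteFaces (i j : ι) : edge i j ∈ (bipartiteFaces : Set (Finset (ι × Bool))) :=
  ⟨⟨(i, true), by simp [edge]⟩, i, j, subset_rfl⟩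

theorem maximal_bipartiteFaces_iff {X : Finset (ι × Bool)} :
    (X ∈ bipartiteFaces ∧ ∀ Y ∈ bipartiteFaces, X ⊆ Y → X = Y) ↔ ∃ i j, X = edge i j := by
  constructor
  · rintro ⟨⟨-, i, j, hX⟩, hmax⟩
    exact ⟨i, j, hmax _ (edge_mem_bipartiteFaces i j) hX⟩
  · rintro ⟨i, j, rfl⟩
    refine ⟨edge_mem_bipartiteFaces i j, ?_⟩
    rintro Y ⟨-, i', j', hY⟩ hXY
    obtain ⟨rfl, rfl⟩ := edge_subset_edge_iff.1 (hXY.trans hY)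
    exact hXY.antisymm hY

theorem injOn_snd_of_mem_bipartiteFaces {X : Finset (ι × Bool)} (hX : X ∈ bipartiteFaces) :
    Set.InjOn Prod.snd (X : Set (ι × Bool)) := by
  obtain ⟨-, i, j, hXe⟩ := hX
  intro v hv w hw hvw
  rw [eq_of_mem_edge_of_snd_eq (hXe hv) rfl, eq_of_mem_edge_of_snd_eq (hXe hw) rfl, hvw]

variable [Nonempty ι]

/-- Arbitrary when `X` has no vertex of colour `a`. -/
noncomputable def vertexOfColour (a : Bool) (X : Finset (ι × Bool)) : ι × Bool :=
  Classical.epsilon fun v => v ∈ X ∧ v.2 = a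

theorem vertexOfColour_edge (a : Bool) (i j : ι) : vertexOfColour a (edge i j) = (cond a i j, a) :=
  have h := Classical.epsilon_spec (exists_mem_edge_snd_eq i j a)
  eq_of_mem_edge_of_snd_eq h.1 h.2

/-- The complete bipartite complex `K_{ι,ι}`: agent `a` owns the vertices `(i, a)`. -/
noncomputable abbrev completeBipartite (ν : Finset (ι × Bool) → P → Prop)
    (N : ι × Bool → Set (Set (Finset (ι × Bool)))) : SSModel Bool P where
  V := ι × Bool
  F := bipartiteFaces
  F_nonempty := ⟨_, edge_mem_bipartiteFaces (Classical.arbitrary ι) (Classical.arbitrary ι)⟩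
  faces_nonempty _ hX := hX.1
  down_closed := by
    rintro X ⟨-, i, j, hX⟩ Y hY hYX
    exact ⟨hY, i, j, hYX.trans hX⟩
  χ := Prod.snd
  chromatic _ := injOn_snd_of_mem_bipartiteFaces
  va := vertexOfColour
  va_spec X hX hmax a := by
    obtain ⟨i, j, rfl⟩ := maximal_bipartiteFaces_iff.1 ⟨hX, hmax⟩
    rw [vertexOfColour_edge]
    exact ⟨cond_mem_edge a i j, rfl⟩
  facet_all_colours X hX hmax a := by
    obtain ⟨i, j, rfl⟩ := maximal_bipartiteFaces_iff.1 ⟨hX, hmax⟩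
    exact exists_mem_edge_snd_eq i j a
  vertex_cover := by
    rintro ⟨k, c⟩
    obtain ⟨i⟩ := ‹Nonempty ι›
    have hmax := maximal_bipartiteFaces_iff.2 ⟨cond c k i, cond c i k, rfl⟩
    exact ⟨_, hmax.1, hmax.2, by cases c <;> simp [edge]⟩
  ν := ν
  N := N

variable {ν : Finset (ι × Bool) → P → Prop} {N : ι × Bool → Set (Set (Finset (ι × Bool)))}

theorem completeBipartite_isFacet_iff {X : Finset (ι × Bool)} :
    (completeBipartite ν N).IsFacet X ↔ ∃ i j, X = edge i j :=
  maximal_bipartiteFaces_iff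

theorem completeBipartite_isFacet_edge (i j : ι) : (completeBipartite ν N).IsFacet (edge i j) :=
  completeBipartite_isFacet_iff.2 ⟨i, j, rfl⟩

end CompleteBipartite

end SSModel

namespace SecrecyNotIdempotent

open SSModel

/-- `⟦p⟧`, for `a = true`, `u_i = (i, true)` and `w_{j+1} = (j, false)`, so that
`x_{j+1} = edge 0 j`, `y_{j+1} = edge 1 j` and `z_{j+1} = edge 2 j`. -/
def secret : Set (Finset (Fin 3 × Bool)) := {edge 0 0, edge 0 1, edge 0 2, edge 1 0}

noncomputable abbrev model : SSModel Bool Unit :=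
  completeBipartite (fun X _ => X ∈ secret) fun v => {U | v = (0, true) ∧ U = secret}

theorem truthSet_atom : model.truthSet (Form.atom ()) = secret := by
  ext X
  refine ⟨And.right, fun hX => ⟨completeBipartite_isFacet_iff.2 ?_, hX⟩⟩
  rcases hX with rfl | rfl | rfl | rfl <;> exact ⟨_, _, rfl⟩

theorem sn : model.SN := by
  rintro v U ⟨rfl, rfl⟩ X hX hvX b hb
  obtain ⟨i, j, rfl⟩ := completeBipartite_isFacet_iff.1 hX
  obtain rfl : b = false := by simpa using hb
  refine ⟨edge 2 j, completeBipartite_isFacet_edge 2 j, ?_, ?_⟩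
  · simp only [vertexOfColour_edge, cond_false]
  · simp [secret, edge_inj]

theorem sat_S_atom : model.Sat (Form.S true (Form.atom ())) (edge 0 0) := by
  rw [sat_S_iff]
  refine ⟨?_, ?_⟩
  · intro Y hY hva
    obtain ⟨i, j, rfl⟩ := completeBipartite_isFacet_iff.1 hY
    obtain rfl : 0 = i := by simpa [vertexOfColour_edge] using hva
    show edge 0 j ∈ secret
    fin_cases j <;> simp [secret]
  · rw [truthSet_atom]
    exact ⟨vertexOfColour_edge true 0 0, rfl⟩

theorem not_sat_S_atom_edge_one_zero : ¬ model.Sat (Form.S true (Form.atom ())) (edge 1 0) := by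
  intro h
  have hp := h.1 (edge 1 1) (completeBipartite_isFacet_edge 1 1) (by simp [vertexOfColour_edge])
  simp [Sat, secret, edge_inj] at hp

end SecrecyNotIdempotent

/-- The secrecy operator is not idempotent: there is a two-agent simplicial secrecy
model and a facet at which `S_a p` holds but `S_a S_a p` fails. -/
theorem secrecy_not_idempotent :
    ∃ (P : Type) (M : SSModel Bool P) (p : P) (a : Bool) (X : Finset M.V),
      M.SN ∧ M.IsFacet X ∧
      M.Sat (Form.S a (Form.atom p)) X ∧
      ¬ M.Sat (Form.S a (Form.S a (Form.atom p))) X := by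
  open SecrecyNotIdempotent SSModel in
  refine ⟨Unit, model, (), true, edge 0 0, sn, completeBipartite_isFacet_edge 0 0, sat_S_atom, ?_⟩
  rintro ⟨-, -, hsecret⟩
  have hmem : edge 1 0 ∈ secret := by simp [secret]
  rw [← hsecret] at hmem
  exact not_sat_S_atom_edge_one_zero hmem.2
end
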